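/- The connections on Moore hyperrectangles satisfy Γᵢᵅ Γⱼᵝ = Γⱼ₊₁ᵝ Γᵢᵅ for i < j, and Γᵢᵅ Γᵢᵅ = Γᵢ₊₁ᵅ Γᵢᵅ. -/
import Mathlib


open scoped NNReal

/-- A Moore `n`-hyperrectangle in `X` with action `f` and shape `r`:
`f` is continuous and constant in the `i`-th variable beyond `r i`. -/
def IsMooreCube {X : Type*} [TopologicalSpace X] (n : ℕ)
    (f : (Fin n → ℝ≥0) → X) (r : Fin n → ℝ≥0) : Prop :=
  Continuous f ∧ ∀ (t : Fin n → ℝ≥0) (i : Fin n), r i ≤ t i →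
    f t = f (Function.update t i (r i))

/-- The raw data (action, shape) of an `n`-hyperrectangle. -/
abbrev CubeData (X : Type*) (n : ℕ) := ((Fin n → ℝ≥0) → X) × (Fin n → ℝ≥0)

/-- The face `∂ᵢᵅ`: evaluate the `i`-th variable at `0` (`α = false`, i.e. `−`)
or at `r i` (`α = true`, i.e. `+`) and delete `r i` from the shape. -/
noncomputable def cubeFace {X : Type*} (α : Bool) {n : ℕ} (i : Fin (n + 1))
    (a : CubeData X (n + 1)) : CubeData X n :=
  (fun t => a.1 (i.insertNth (if α then a.2 i else 0) t), i.removeNth a.2)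

/-- The degeneracy `εᵢ`: insert shape `0` in position `i` and ignore the
`i`-th variable. -/
noncomputable def cubeDeg {X : Type*} {n : ℕ} (i : Fin (n + 1))
    (a : CubeData X n) : CubeData X (n + 1) :=
  (fun t => a.1 (i.removeNth t), i.insertNth 0 a.2)

/-- The connection `Γᵢᵅ`: duplicate `r i` in the shape (positions `i`, `i+1`)
and precompose with the `max` (`α = false`, i.e. `Γ⁻`) or `min`
(`α = true`, i.e. `Γ⁺`) of the `i`-th and `(i+1)`-th coordinates. -/
noncomputable def cubeConn {X : Type*} (α : Bool) {n : ℕ} (i : Fin n)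
    (a : CubeData X n) : CubeData X (n + 1) :=
  (fun t => a.1 (Function.update (i.castSucc.removeNth t) i
      (if α then min (t i.castSucc) (t i.succ) else max (t i.castSucc) (t i.succ))),
   i.castSucc.insertNth (a.2 i) a.2)

/-- Concatenation `a ∘ᵢ b` in direction `i` (meaningful when
`∂ᵢ⁺ a = ∂ᵢ⁻ b`): shape `rᵢ + sᵢ` in direction `i`, action `f` for
`tᵢ ≤ rᵢ` and `g` (shifted) for `tᵢ ≥ rᵢ`. -/
noncomputable def cubeComp {X : Type*} {n : ℕ} (i : Fin n)
    (a b : CubeData X n) : CubeData X n :=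
  (fun t => if t i ≤ a.2 i then a.1 t
            else b.1 (Function.update t i (t i - a.2 i)),
   Function.update a.2 i (a.2 i + b.2 i))


lemma ev_update {γ : Type*} {n : ℕ} (g : Fin n → γ) (p : Fin n) (x : γ) (k : Fin n) :
    Function.update g p x k = if (k:ℕ) = (p:ℕ) then x else g k := by
  rcases eq_or_ne k p with rfl | h
  · simp
  · rw [Function.update_of_ne h, if_neg (fun hh => h (Fin.ext hh))]

lemma ev_remove {γ : Type*} {n : ℕ} (p : Fin (n+1)) (g : Fin (n+1) → γ) (k : Fin n) :
    p.removeNth g k = if h : (k:ℕ) < (p:ℕ) then g ⟨k, by have := k.isLt; omega⟩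
      else g ⟨(k:ℕ)+1, by have := k.isLt; omega⟩ := by
  unfold Fin.removeNth
  rcases lt_or_ge (Fin.castSucc k) p with h | h
  · rw [Fin.succAbove_of_castSucc_lt _ _ h, dif_pos (by exact h)]
    exact congrArg g (Fin.ext rfl)
  · have h' : (p:ℕ) ≤ (k:ℕ) := h
    rw [Fin.succAbove_of_le_castSucc _ _ h, dif_neg (by omega)]
    exact congrArg g (Fin.ext rfl)

lemma ev_insert {γ : Type*} {n : ℕ} (p : Fin (n+1)) (x : γ) (g : Fin n → γ) (k : Fin (n+1)) :
    Fin.insertNth (α := fun _ => γ) p x g k =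
      if h : (k:ℕ) < (p:ℕ) then g ⟨k, by have := p.isLt; omega⟩
      else if h2 : (k:ℕ) = (p:ℕ) then x
      else g ⟨(k:ℕ)-1, by have := k.isLt; omega⟩ := by
  rcases eq_or_ne k p with rfl | hk
  · simp
  · obtain ⟨j, rfl⟩ := Fin.exists_succAbove_eq hk
    rw [Fin.insertNth_apply_succAbove (α := fun _ => γ) p x g j]
    rcases lt_or_ge (Fin.castSucc j) p with h | h
    · rw [Fin.succAbove_of_castSucc_lt _ _ h, dif_pos (by exact h)]
      exact congrArg g (Fin.ext rfl)
    · have h' : (p:ℕ) ≤ (j:ℕ) := h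
      rw [Fin.succAbove_of_le_castSucc _ _ h, dif_neg (by simp; omega),
        dif_neg (by simp; omega)]
      exact congrArg g (Fin.ext (by simp))

noncomputable def connArg (op : ℝ≥0 → ℝ≥0 → ℝ≥0) {m : ℕ} (p : Fin m)
    (t : Fin (m+1) → ℝ≥0) : Fin m → ℝ≥0 :=
  fun k => if h : (k:ℕ) < (p:ℕ) then t ⟨k, by have := k.isLt; omega⟩
    else if h2 : (k:ℕ) = (p:ℕ) then
      op (t ⟨p, by have := p.isLt; omega⟩) (t ⟨(p:ℕ)+1, by have := p.isLt; omega⟩)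
    else t ⟨(k:ℕ)+1, by have := k.isLt; omega⟩

lemma cubeConn_fst {X : Type*} (α : Bool) {m : ℕ} (p : Fin m) (a : CubeData X m)
    (t : Fin (m+1) → ℝ≥0) :
    (cubeConn α p a).1 t = a.1 (connArg (if α then min else max) p t) := by
  show a.1 _ = a.1 _
  refine congrArg _ (funext fun k => ?_)
  have hk := k.isLt
  have hp := p.isLt
  cases α <;>
    simp only [connArg, cubeConn, ev_update, ev_remove, Fin.coe_castSucc, Fin.val_succ,
      if_true, if_false, Bool.false_eq_true, ite_false, ite_true] <;>
  split_ifs <;> first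
    | rfl
    | omega
    | exact (‹False›).elim
    | (exact congrArg t (Fin.ext (by first | omega | (simp; omega))))
    | (congr 1 <;> exact congrArg t (Fin.ext (by first | omega | (simp; omega))))


set_option maxHeartbeats 2000000 in
/-- the connections satisfy `Γᵢᵅ Γⱼᵝ = Γⱼ₊₁ᵝ Γᵢᵅ (i < j)` and
`Γᵢᵅ Γᵢᵅ = Γᵢ₊₁ᵅ Γᵢᵅ`. -/
theorem cubeConn_comm {X : Type*} [TopologicalSpace X]
    (n : ℕ) (f : (Fin n → ℝ≥0) → X) (r : Fin n → ℝ≥0)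
    (hf : IsMooreCube n f r) :
    (∀ (α β : Bool) (i j : Fin n), i < j →
      cubeConn α i.castSucc (cubeConn β j (f, r))
        = cubeConn β j.succ (cubeConn α i (f, r))) ∧
    (∀ (α : Bool) (i : Fin n),
      cubeConn α i.castSucc (cubeConn α i (f, r))
        = cubeConn α i.succ (cubeConn α i (f, r))) := by
  constructor
  · intro α β i j hij
    have hij' : (i:ℕ) < (j:ℕ) := hij
    have hi := i.isLt; have hj := j.isLt
    refine Prod.ext ?_ ?_
    · funext u
      show (cubeConn _ _ _).1 u = (cubeConn _ _ _).1 u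
      rw [cubeConn_fst, cubeConn_fst, cubeConn_fst, cubeConn_fst]
      refine congrArg _ (funext fun k => ?_)
      have hk := k.isLt
      simp only [connArg, Fin.coe_castSucc, Fin.val_succ]
      split_ifs <;> first
        | rfl
        | exact (‹False›).elim
        | omega
        | (exact congrArg u (Fin.ext (by first | omega | (simp; omega))))
        | (congr 1 <;> exact congrArg u (Fin.ext (by first | omega | (simp; omega))))
    · funext k
      have hk := k.isLt
      have hi := i.isLt; have hj := j.isLt
      have hij' : (i:ℕ) < (j:ℕ) := hij
      simp only [cubeConn, ev_insert, Fin.coe_castSucc, Fin.val_succ]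
      split_ifs <;> first
        | rfl
        | exact (‹False›).elim
        | omega
        | (exact congrArg r (Fin.ext (by first | omega | (simp; omega))))
  · intro α i
    have hi := i.isLt
    refine Prod.ext ?_ ?_
    · funext u
      show (cubeConn _ _ _).1 u = (cubeConn _ _ _).1 u
      rw [cubeConn_fst, cubeConn_fst, cubeConn_fst, cubeConn_fst]
      refine congrArg _ (funext fun k => ?_)
      have hk := k.isLt
      simp only [connArg, Fin.coe_castSucc, Fin.val_succ]
      cases α <;> simp only [if_true, if_false, Bool.false_eq_true, ite_false, ite_true] <;>
      split_ifs <;> first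
        | rfl
        | exact (‹False›).elim
        | omega
        | (exact congrArg u (Fin.ext (by first | omega | (simp; omega))))
        | (congr 1 <;> exact congrArg u (Fin.ext (by first | omega | (simp; omega))))
        | (rw [min_assoc] <;> congr 1 <;> first
            | (exact congrArg u (Fin.ext (by first | omega | (simp; omega))))
            | (congr 1 <;> exact congrArg u (Fin.ext (by first | omega | (simp; omega)))))
        | (rw [max_assoc] <;> congr 1 <;> first
            | (exact congrArg u (Fin.ext (by first | omega | (simp; omega))))
            | (congr 1 <;> exact congrArg u (Fin.ext (by first | omega | (simp; omega)))))
    · funext k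
      have hk := k.isLt
      simp only [cubeConn, ev_insert, Fin.coe_castSucc, Fin.val_succ]
      split_ifs <;> first
        | rfl
        | exact (‹False›).elim
        | omega
        | (exact congrArg r (Fin.ext (by first | omega | (simp; omega))))
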